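/- arXiv:1807.04473 — 4 statements merged into one kernel-verified Lean document; each statement's English description precedes it below -/
import Mathlib

section
/- With K = I_M + Σ_{n=1}^L p_n R_n where each R_n is Hermitian PSD and p_n ≥ 0, the matrix R_m − p_m · R_m K⁻¹ R_m is Hermitian positive semidefinite for every m. -/
/-!
With `c = √p`, the block matrix `[[K, c R], [c R, R]]` is the sum of `[[K - p R, 0], [0, 0]]` and
`[c I, I]ᴴ R [c I, I]`, hence positive semidefinite as soon as `K - p R` is. Its Schur complement
with respect to the positive definite block `K` is `R - p R K⁻¹ R`. For `K = I + ∑ pₙ Rₙ` and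
`p = p_m`, `R = R_m`, the difference `K - p_m R_m = I + ∑_{n ≠ m} pₙ Rₙ` is positive semidefinite.
-/

open Matrix Finset
open scoped ComplexOrder

namespace Matrix

variable {𝕜 n : Type*} [RCLike 𝕜] [Fintype n]

theorem conjTranspose_fromCols_mul_mul_fromCols {m₁ m₂ : Type*} (A : Matrix n m₁ 𝕜)
    (B : Matrix n m₂ 𝕜) (X : Matrix n n 𝕜) :
    (fromCols A B)ᴴ * X * fromCols A B =
      fromBlocks (Aᴴ * X * A) (Aᴴ * X * B) (Bᴴ * X * A) (Bᴴ * X * B) := by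
  rw [conjTranspose_fromCols_eq_fromRows_conjTranspose, fromRows_mul, fromRows_mul_fromCols]

variable [DecidableEq n]

theorem PosSemidef.sub_smul_mul_inv_mul {K R : Matrix n n 𝕜} {p : ℝ} (hK : K.PosDef)
    (hR : R.PosSemidef) (hp : 0 ≤ p) (hKR : (K - p • R).PosSemidef) :
    (R - p • (R * K⁻¹ * R)).PosSemidef := by
  have := hK.isUnit.invertible
  set c := Real.sqrt p
  have hcR : (c • R)ᴴ = c • R := by simp [conjTranspose_smul, hR.isHermitian.eq]
  have hblock : (fromBlocks K (c • R) (c • R)ᴴ R).PosSemidef := by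
    have h1 := hKR.conjTranspose_mul_mul_same (fromCols (1 : Matrix n n 𝕜) (0 : Matrix n n 𝕜))
    have h2 := hR.conjTranspose_mul_mul_same (fromCols (c • 1 : Matrix n n 𝕜) (1 : Matrix n n 𝕜))
    rw [conjTranspose_fromCols_mul_mul_fromCols] at h1 h2
    convert h1.add h2 using 1
    simp [fromBlocks_add, hcR, smul_smul, c, hp]
  simpa [hcR, smul_smul, c, hp] using (PosDef.fromBlocks₁₁ (c • R) R hK).mp hblock

end Matrix

theorem stmt_1_general (M L : ℕ)
    (R : Fin L → Matrix (Fin M) (Fin M) ℂ)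
    (hR : ∀ n, (R n).PosSemidef)
    (p : Fin L → ℝ) (hp : ∀ n, 0 ≤ p n)
    (K : Matrix (Fin M) (Fin M) ℂ)
    (hK : K = 1 + ∑ n : Fin L, p n • R n) :
    ∀ m : Fin L, (R m - p m • (R m * K⁻¹ * R m)).PosSemidef := by
  intro m
  have hsum (s : Finset (Fin L)) : (∑ n ∈ s, p n • R n).PosSemidef :=
    posSemidef_sum s fun n _ => (hR n).smul (hp n)
  have hKm : K - p m • R m = 1 + ∑ n ∈ univ.erase m, p n • R n := by
    rw [hK, ← add_sum_erase _ _ (mem_univ m)]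
    abel
  refine (hR m).sub_smul_mul_inv_mul ?_ (hp m) ?_
  · rw [hK]
    exact PosDef.one.add_posSemidef (hsum univ)
  · rw [hKm]
    exact PosSemidef.one.add (hsum _)

/-- with `K = I + ∑ p n • R n` (each `R n` Hermitian PSD, `p n ≥ 0`),
the MMSE error covariance `R m - p m • R m K⁻¹ R m` is Hermitian PSD for every `m`. -/
theorem stmt_1 (M L : ℕ) (hM : 0 < M) (hL : 0 < L)
    (R : Fin L → Matrix (Fin M) (Fin M) ℂ)
    (hR : ∀ n, (R n).PosSemidef)
    (p : Fin L → ℝ) (hp : ∀ n, 0 ≤ p n)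
    (K : Matrix (Fin M) (Fin M) ℂ)
    (hK : K = 1 + ∑ n : Fin L, p n • R n) :
    ∀ m : Fin L, (R m - p m • (R m * K⁻¹ * R m)).PosSemidef :=
  stmt_1_general M L R hR p hp K hK
end

section
/- Define the interference function I_{kl}(q) = γ · q_{kl} / SINR_{kl}(q) where SINR_{kl}(q) = c_{kl}^H (Σ_{n≠l} q_{kn} p_{kn} c_{kn} c_{kn}^H + D_k)⁻¹ c_{kl} · p_{kl} q_{kl}. Then I_{kl}(q) = γ / (p_{kl} · c_{kl}^H (Σ_{n≠l} q_{kn} p_{kn} c_{kn} c_{kn}^H + D_k)⁻¹ c_{kl}) is a standard interference function: it is positive, monotone (q ≤ q' componentwise implies I(q) ≤ I(q')), and scalable (for α > 1, α I(q) > I(α q) componentwise). -/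
open Matrix Finset
open scoped ComplexOrder MatrixOrder

/-!
For positive definite `M`, the concave function `u ↦ 2 Re (uᴴ c) - uᴴ M u` attains its maximum
`cᴴ M⁻¹ c` at `u = M⁻¹ c`. Evaluating the variational formula for `M` at the maximiser for
`M' ≥ M` shows that `M ↦ cᴴ M⁻¹ c` is antitone in the Loewner order, strictly when `M' - M` is
positive definite and `c ≠ 0`. The interference matrix `A q` is Loewner-monotone in `q`, which gives
monotonicity of `I`; for scalability, `A (α • q) = α • A q - (α - 1) • D` lies strictly below
`α • A q`, whose inverse form is `α⁻¹` times that of `A q`.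
-/

namespace Matrix

variable {n : Type*} [Fintype n]

lemma re_star_dotProduct_comm (u w : n → ℂ) : (star u ⬝ᵥ w).re = (star w ⬝ᵥ u).re := by
  rw [star_dotProduct, Complex.star_def, Complex.conj_re]

lemma PosSemidef.re_dotProduct_mulVec_nonneg {M : Matrix n n ℂ} (hM : M.PosSemidef) (x : n → ℂ) :
    0 ≤ (star x ⬝ᵥ (M *ᵥ x)).re :=
  (Complex.nonneg_iff.mp (hM.dotProduct_mulVec_nonneg x)).1

lemma PosDef.re_dotProduct_mulVec_pos {M : Matrix n n ℂ} (hM : M.PosDef) {x : n → ℂ}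
    (hx : x ≠ 0) : 0 < (star x ⬝ᵥ (M *ᵥ x)).re :=
  (Complex.pos_iff.mp (hM.dotProduct_mulVec_pos hx)).1

section Inverse

variable [DecidableEq n]

lemma PosDef.mulVec_inv_mulVec {M : Matrix n n ℂ} (hM : M.PosDef) (c : n → ℂ) :
    M *ᵥ (M⁻¹ *ᵥ c) = c := by
  rw [mulVec_mulVec, mul_nonsing_inv _ ((isUnit_iff_isUnit_det _).mp hM.isUnit), one_mulVec]

lemma PosDef.star_inv_mulVec_dotProduct_mulVec {M : Matrix n n ℂ} (hM : M.PosDef) (c x : n → ℂ) :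
    star (M⁻¹ *ᵥ c) ⬝ᵥ (M *ᵥ x) = star c ⬝ᵥ x := by
  rw [star_mulVec, hM.isHermitian.inv.eq, ← dotProduct_mulVec, mulVec_mulVec,
    nonsing_inv_mul _ ((isUnit_iff_isUnit_det _).mp hM.isUnit), one_mulVec]

/-- Completing the square around `x = M⁻¹ c`. -/
lemma PosDef.two_re_sub_le_re_dotProduct_inv_mulVec {M : Matrix n n ℂ} (hM : M.PosDef)
    (c x : n → ℂ) :
    2 * (star x ⬝ᵥ c).re - (star x ⬝ᵥ (M *ᵥ x)).re ≤ (star c ⬝ᵥ (M⁻¹ *ᵥ c)).re := by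
  set u := M⁻¹ *ᵥ c
  have hsq := hM.posSemidef.re_dotProduct_mulVec_nonneg (x - u)
  rw [mulVec_sub, hM.mulVec_inv_mulVec, star_sub, sub_dotProduct, dotProduct_sub, dotProduct_sub,
    hM.star_inv_mulVec_dotProduct_mulVec] at hsq
  simp only [Complex.sub_re, re_star_dotProduct_comm c x, re_star_dotProduct_comm u c] at hsq
  linarith

lemma PosDef.re_dotProduct_inv_mulVec_add_le {M M' : Matrix n n ℂ} (hM : M.PosDef)
    (hM' : M'.PosDef) (c : n → ℂ) :
    (star c ⬝ᵥ (M'⁻¹ *ᵥ c)).re + (star (M'⁻¹ *ᵥ c) ⬝ᵥ ((M' - M) *ᵥ (M'⁻¹ *ᵥ c))).re ≤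
      (star c ⬝ᵥ (M⁻¹ *ᵥ c)).re := by
  have h := hM.two_re_sub_le_re_dotProduct_inv_mulVec c (M'⁻¹ *ᵥ c)
  rw [sub_mulVec, dotProduct_sub, Complex.sub_re, hM'.star_inv_mulVec_dotProduct_mulVec]
  rw [re_star_dotProduct_comm (M'⁻¹ *ᵥ c) c] at h
  linarith

lemma re_dotProduct_inv_mulVec_antitone {M M' : Matrix n n ℂ} (hM : M.PosDef)
    (hM' : M'.PosDef) (h : M ≤ M') (c : n → ℂ) :
    (star c ⬝ᵥ (M'⁻¹ *ᵥ c)).re ≤ (star c ⬝ᵥ (M⁻¹ *ᵥ c)).re := by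
  linarith [hM.re_dotProduct_inv_mulVec_add_le hM' c,
    (le_iff.mp h).re_dotProduct_mulVec_nonneg (M'⁻¹ *ᵥ c)]

lemma re_dotProduct_inv_mulVec_strictAnti {M M' : Matrix n n ℂ} (hM : M.PosDef)
    (h : (M' - M).PosDef) {c : n → ℂ} (hc : c ≠ 0) :
    (star c ⬝ᵥ (M'⁻¹ *ᵥ c)).re < (star c ⬝ᵥ (M⁻¹ *ᵥ c)).re := by
  have hM' : M'.PosDef := by simpa using hM.add h
  have hu : M'⁻¹ *ᵥ c ≠ 0 := fun hu => hc (by rw [← hM'.mulVec_inv_mulVec c, hu, mulVec_zero])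
  linarith [hM.re_dotProduct_inv_mulVec_add_le hM' c, h.re_dotProduct_mulVec_pos hu]

lemma PosDef.re_dotProduct_inv_mulVec_pos {M : Matrix n n ℂ} (hM : M.PosDef) {c : n → ℂ}
    (hc : c ≠ 0) : 0 < (star c ⬝ᵥ (M⁻¹ *ᵥ c)).re :=
  hM.inv.re_dotProduct_mulVec_pos hc

lemma PosDef.re_dotProduct_smul_inv_mulVec {M : Matrix n n ℂ} (hM : M.PosDef) {α : ℝ}
    (hα : α ≠ 0) (c : n → ℂ) :
    (star c ⬝ᵥ ((α • M)⁻¹ *ᵥ c)).re = α⁻¹ * (star c ⬝ᵥ (M⁻¹ *ᵥ c)).re := by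
  have : (α • M)⁻¹ = α⁻¹ • M⁻¹ := inv_eq_left_inv <| by
    rw [smul_mul_smul_comm, inv_mul_cancel₀ hα,
      nonsing_inv_mul _ ((isUnit_iff_isUnit_det _).mp hM.isUnit), one_smul]
  rw [this, smul_mulVec, dotProduct_smul, Complex.smul_re, smul_eq_mul]

end Inverse

variable {ι : Type*} {s : Finset ι}

lemma sum_smul_vecMulVec_self_star_mono {w w' : ι → ℝ} (h : ∀ i ∈ s, w i ≤ w' i)
    (v : ι → n → ℂ) :
    ∑ i ∈ s, w i • vecMulVec (v i) (star (v i)) ≤ ∑ i ∈ s, w' i • vecMulVec (v i) (star (v i)) :=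
  sum_le_sum fun i hi => by
    rw [le_iff, ← sub_smul]
    exact (posSemidef_vecMulVec_self_star (v i)).smul (sub_nonneg.2 (h i hi))

lemma posDef_sum_smul_vecMulVec_self_star_add {w : ι → ℝ} (hw : ∀ i ∈ s, 0 ≤ w i)
    (v : ι → n → ℂ) {D : Matrix n n ℂ} (hD : D.PosDef) :
    (∑ i ∈ s, w i • vecMulVec (v i) (star (v i)) + D).PosDef :=
  .posSemidef_add
    (posSemidef_sum s fun i hi => (posSemidef_vecMulVec_self_star (v i)).smul (hw i hi)) hD

end Matrix

theorem stmt_8_general (N L : ℕ)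
    (c : Fin L → (Fin N → ℂ)) (hc : ∀ n, c n ≠ 0) (l : Fin L)
    (p : Fin L → ℝ) (hp : ∀ n, 0 < p n)
    (γ : ℝ) (hγ : 0 < γ)
    (D : Matrix (Fin N) (Fin N) ℂ) (hD : D.PosDef)
    (A : (Fin L → ℝ) → Matrix (Fin N) (Fin N) ℂ)
    (hA : ∀ q, A q =
      (∑ n ∈ Finset.univ.erase l, (q n * p n) • vecMulVec (c n) (star (c n))) + D)
    (I : (Fin L → ℝ) → ℝ)
    (hI : ∀ q, I q = γ / (p l * (star (c l) ⬝ᵥ ((A q)⁻¹ *ᵥ c l)).re)) :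
    -- positivity
    (∀ q : Fin L → ℝ, (∀ n, 0 ≤ q n) → 0 < I q) ∧
    -- monotonicity
    (∀ q q' : Fin L → ℝ, (∀ n, 0 ≤ q n) → (∀ n, q n ≤ q' n) → I q ≤ I q') ∧
    -- scalability
    (∀ q : Fin L → ℝ, (∀ n, 0 ≤ q n) → ∀ α : ℝ, 1 < α → I (α • q) < α * I q) := by
  have hA_posDef : ∀ q, (∀ n, 0 ≤ q n) → (A q).PosDef := fun q hq =>
    hA q ▸ posDef_sum_smul_vecMulVec_self_star_add (fun n _ => mul_nonneg (hq n) (hp n).le) c hD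
  have hA_mono : ∀ q q', (∀ n, q n ≤ q' n) → A q ≤ A q' := fun q q' hle => by
    rw [hA, hA]
    exact add_le_add_left (sum_smul_vecMulVec_self_star_mono
      (fun n _ => mul_le_mul_of_nonneg_right (hle n) (hp n).le) c) D
  have hA_smul : ∀ q (α : ℝ), α • A q - A (α • q) = (α - 1) • D := fun q α => by
    simp only [hA, smul_add, smul_sum, smul_smul, Pi.smul_apply, smul_eq_mul, mul_assoc,
      sub_smul, one_smul]
    abel
  set f : (Fin L → ℝ) → ℝ := fun q => (star (c l) ⬝ᵥ ((A q)⁻¹ *ᵥ c l)).re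
  have hf_pos : ∀ q, (∀ n, 0 ≤ q n) → 0 < f q := fun q hq =>
    (hA_posDef q hq).re_dotProduct_inv_mulVec_pos (hc l)
  refine ⟨fun q hq => ?_, fun q q' hq hle => ?_, fun q hq α hα => ?_⟩
  · rw [hI]
    exact div_pos hγ (mul_pos (hp l) (hf_pos q hq))
  · have hq' : ∀ n, 0 ≤ q' n := fun n => (hq n).trans (hle n)
    rw [hI, hI]
    exact div_le_div_of_nonneg_left hγ.le (mul_pos (hp l) (hf_pos q' hq'))
      (mul_le_mul_of_nonneg_left (re_dotProduct_inv_mulVec_antitone (hA_posDef q hq)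
        (hA_posDef q' hq') (hA_mono q q' hle) (c l)) (hp l).le)
  · have hα0 : 0 < α := one_pos.trans hα
    have hαq : ∀ n, 0 ≤ (α • q) n := fun n => mul_nonneg hα0.le (hq n)
    have hf_lt : α⁻¹ * f q < f (α • q) := by
      rw [← (hA_posDef q hq).re_dotProduct_smul_inv_mulVec hα0.ne']
      refine re_dotProduct_inv_mulVec_strictAnti (hA_posDef _ hαq) ?_ (hc l)
      rw [hA_smul]
      exact hD.smul (sub_pos.2 hα)
    rw [hI, hI]
    calc γ / (p l * f (α • q))
        < γ / (p l * (α⁻¹ * f q)) :=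
          div_lt_div_of_pos_left hγ (mul_pos (hp l) (by have := hf_pos q hq; positivity))
            (mul_lt_mul_of_pos_left hf_lt (hp l))
      _ = α * (γ / (p l * f q)) := by field_simp

/-- the interference function
`I(q) = γ / (p_l · c_lᴴ (∑_{n≠l} q n p n • c_n c_nᴴ + D)⁻¹ c_l)`
is a standard interference function: positive, monotone and scalable. -/
theorem stmt_8 (N L : ℕ) (hN : 0 < N) (hL : 0 < L)
    (c : Fin L → (Fin N → ℂ)) (hc : ∀ n, c n ≠ 0) (l : Fin L)
    (p : Fin L → ℝ) (hp : ∀ n, 0 < p n)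
    (γ : ℝ) (hγ : 0 < γ)
    (D : Matrix (Fin N) (Fin N) ℂ) (hD : D.PosDef)
    (A : (Fin L → ℝ) → Matrix (Fin N) (Fin N) ℂ)
    (hA : ∀ q, A q =
      (∑ n ∈ Finset.univ.erase l, (q n * p n) • vecMulVec (c n) (star (c n))) + D)
    (I : (Fin L → ℝ) → ℝ)
    (hI : ∀ q, I q = γ / (p l * (star (c l) ⬝ᵥ ((A q)⁻¹ *ᵥ c l)).re)) :
    -- positivity
    (∀ q : Fin L → ℝ, (∀ n, 0 ≤ q n) → 0 < I q) ∧
    -- monotonicity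
    (∀ q q' : Fin L → ℝ, (∀ n, 0 ≤ q n) → (∀ n, q n ≤ q' n) → I q ≤ I q') ∧
    -- scalability
    (∀ q : Fin L → ℝ, (∀ n, 0 ≤ q n) → ∀ α : ℝ, 1 < α → I (α • q) < α * I q) :=
  stmt_8_general N L c hc l p hp γ hγ D hD A hA I hI
end

section
/- Let I: ℝ_{≥0}^m → ℝ_{>0}^m be a standard interference function (positive, monotone, and scalable: α I(q) > I(αq) componentwise for all α > 1), and let F(q) = min{Q_max·1, I(q)} componentwise with Q_max > 0. Then F is also positive, monotone, and scalable, and the iteration q^{(n+1)} = F(q^{(n)}) starting from q^{(0)} = Q_max·1 produces a componentwise nonincreasing sequence that converges. -/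
/-!
Capping at `Qmax` keeps scalability because `Qmax < α * Qmax` for `α > 1`. The iterates
stay nonnegative, `q¹ ≤ q⁰ = Qmax` and monotonicity propagate `qⁿ⁺¹ ≤ qⁿ`, and a
nonincreasing sequence bounded below by `0` converges to its infimum.
-/

open Filter Set

theorem min_lt_mul_min {c x y α : ℝ} (hc : 0 < c) (hα : 1 < α) (hxy : x < α * y) :
    min c x < α * min c y := by
  rw [mul_min_of_nonneg _ _ (zero_le_one.trans hα.le)]
  exact lt_min ((min_le_left _ _).trans_lt (lt_mul_left hc hα)) ((min_le_right _ _).trans_lt hxy)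

section StandardInterference

variable {ι : Type*}

structure IsStandardInterference (I : (ι → ℝ) → ι → ℝ) : Prop where
  pos : ∀ q, 0 ≤ q → ∀ i, 0 < I q i
  mono : ∀ q q', 0 ≤ q → q ≤ q' → ∀ i, I q i ≤ I q' i
  scalable : ∀ q, 0 ≤ q → ∀ α : ℝ, 1 < α → ∀ i, I (α • q) i < α * I q i

namespace IsStandardInterference

variable {I : (ι → ℝ) → ι → ℝ}

theorem mapsTo_nonneg (hI : IsStandardInterference I) : MapsTo I (Ici 0) (Ici 0) :=
  fun q hq i => (hI.pos q hq i).le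

theorem monotoneOn_nonneg (hI : IsStandardInterference I) : MonotoneOn I (Ici 0) :=
  fun q hq _ _ hle => hI.mono q _ hq hle

theorem min_const {c : ℝ} (hI : IsStandardInterference I) (hc : 0 < c) :
    IsStandardInterference fun q i => min c (I q i) where
  pos q hq i := lt_min hc (hI.pos q hq i)
  mono q q' hq hle i := min_le_min le_rfl (hI.mono q q' hq hle i)
  scalable q hq α hα i := min_lt_mul_min hc hα (hI.scalable q hq α hα i)

end IsStandardInterference

end StandardInterference

section Iteration

variable {α : Type*} {f : α → α} {s : Set α} {q : ℕ → α}

theorem mem_of_succ_eq_of_mapsTo (hs : MapsTo f s s) (hq : ∀ n, q (n + 1) = f (q n))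
    (h0 : q 0 ∈ s) (n : ℕ) : q n ∈ s := by
  induction n with
  | zero => exact h0
  | succ n ih => exact hq n ▸ hs ih

theorem antitone_of_succ_eq_of_monotoneOn [Preorder α] (hs : MapsTo f s s)
    (hf : MonotoneOn f s) (hq : ∀ n, q (n + 1) = f (q n)) (h0 : q 0 ∈ s) (h1 : q 1 ≤ q 0) :
    Antitone q := by
  have hmem := mem_of_succ_eq_of_mapsTo hs hq h0
  refine antitone_nat_of_succ_le fun n => ?_
  induction n with
  | zero => exact h1
  | succ n ih =>
    calc q (n + 2) = f (q (n + 1)) := hq _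
      _ ≤ f (q n) := hf (hmem _) (hmem _) ih
      _ = q (n + 1) := (hq n).symm

end Iteration

theorem stmt_9_general (m : ℕ) (Qmax : ℝ) (hQ : 0 < Qmax)
    (I : (Fin m → ℝ) → (Fin m → ℝ))
    (hpos : ∀ q, (∀ i, 0 ≤ q i) → ∀ i, 0 < I q i)
    (hmono : ∀ q q', (∀ i, 0 ≤ q i) → (∀ i, q i ≤ q' i) → ∀ i, I q i ≤ I q' i)
    (hscal : ∀ q, (∀ i, 0 ≤ q i) → ∀ α : ℝ, 1 < α → ∀ i, I (α • q) i < α * I q i)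
    (F : (Fin m → ℝ) → (Fin m → ℝ))
    (hF : ∀ q i, F q i = min Qmax (I q i))
    (qseq : ℕ → (Fin m → ℝ))
    (hq0 : ∀ i, qseq 0 i = Qmax)
    (hqs : ∀ n, qseq (n + 1) = F (qseq n)) :
    -- F is positive
    (∀ q, (∀ i, 0 ≤ q i) → ∀ i, 0 < F q i) ∧
    -- F is monotone
    (∀ q q', (∀ i, 0 ≤ q i) → (∀ i, q i ≤ q' i) → ∀ i, F q i ≤ F q' i) ∧
    -- F is scalable
    (∀ q, (∀ i, 0 ≤ q i) → ∀ α : ℝ, 1 < α → ∀ i, F (α • q) i < α * F q i) ∧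
    -- the iterates are componentwise nonincreasing
    (∀ n i, qseq (n + 1) i ≤ qseq n i) ∧
    -- and converge
    (∃ qlim : Fin m → ℝ, ∀ i, Tendsto (fun n => qseq n i) atTop (nhds (qlim i))) := by
  obtain rfl : F = fun q i => min Qmax (I q i) := funext fun q => funext (hF q)
  have hstd : IsStandardInterference fun q i => min Qmax (I q i) :=
    IsStandardInterference.min_const ⟨hpos, hmono, hscal⟩ hQ
  have h0 : 0 ≤ qseq 0 := fun i => (hq0 i).symm ▸ hQ.le
  have h1 : qseq 1 ≤ qseq 0 := fun i => by rw [hqs, hq0]; exact min_le_left _ _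
  have hanti : Antitone qseq :=
    antitone_of_succ_eq_of_monotoneOn hstd.mapsTo_nonneg hstd.monotoneOn_nonneg hqs h0 h1
  have hbdd : BddBelow (range qseq) :=
    ⟨0, forall_mem_range.2 (mem_of_succ_eq_of_mapsTo hstd.mapsTo_nonneg hqs h0)⟩
  refine ⟨hstd.pos, hstd.mono, hstd.scalable, fun n => hanti n.le_succ, ⨅ n, qseq n, ?_⟩
  exact tendsto_pi_nhds.1 (tendsto_atTop_ciInf hanti hbdd)

/-- if `I` is a standard interference function (positive, monotone,
scalable) and `F q = min (Q_max • 1) (I q)` componentwise with `Q_max > 0`, then `F`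
is positive, monotone and scalable, and the iteration `q^{(n+1)} = F (q^{(n)})`
started from `q^{(0)} = Q_max • 1` is componentwise nonincreasing and converges. -/
theorem stmt_9 (m : ℕ) (hm : 0 < m) (Qmax : ℝ) (hQ : 0 < Qmax)
    (I : (Fin m → ℝ) → (Fin m → ℝ))
    (hpos : ∀ q, (∀ i, 0 ≤ q i) → ∀ i, 0 < I q i)
    (hmono : ∀ q q', (∀ i, 0 ≤ q i) → (∀ i, q i ≤ q' i) → ∀ i, I q i ≤ I q' i)
    (hscal : ∀ q, (∀ i, 0 ≤ q i) → ∀ α : ℝ, 1 < α → ∀ i, I (α • q) i < α * I q i)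
    (F : (Fin m → ℝ) → (Fin m → ℝ))
    (hF : ∀ q i, F q i = min Qmax (I q i))
    (qseq : ℕ → (Fin m → ℝ))
    (hq0 : ∀ i, qseq 0 i = Qmax)
    (hqs : ∀ n, qseq (n + 1) = F (qseq n)) :
    -- F is positive
    (∀ q, (∀ i, 0 ≤ q i) → ∀ i, 0 < F q i) ∧
    -- F is monotone
    (∀ q q', (∀ i, 0 ≤ q i) → (∀ i, q i ≤ q' i) → ∀ i, F q i ≤ F q' i) ∧
    -- F is scalable
    (∀ q, (∀ i, 0 ≤ q i) → ∀ α : ℝ, 1 < α → ∀ i, F (α • q) i < α * F q i) ∧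
    -- the iterates are componentwise nonincreasing
    (∀ n i, qseq (n + 1) i ≤ qseq n i) ∧
    -- and converge
    (∃ qlim : Fin m → ℝ, ∀ i, Tendsto (fun n => qseq n i) atTop (nhds (qlim i))) :=
  stmt_9_general m Qmax hQ I hpos hmono hscal F hF qseq hq0 hqs
end

section
/- If a standard interference function F (positive, monotone, scalable) has a fixed point q* with F(q*) = q*, then q* is the unique fixed point, and for any feasible q with q ≥ F(q) we have q ≥ q* componentwise (i.e., the fixed point minimizes each power among all feasible vectors). -/
/-!
If `p ≤ F p` and `F q ≤ q` with `q > 0`, let `β = maxᵢ pᵢ / qᵢ`, attained at `j`. Were `β > 1`,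
monotonicity and scalability would give `p j ≤ F p j ≤ F (β • q) j < β * F q j ≤ β * q j = p j`.
So `p ≤ q`. Positivity of `F` makes every feasible vector positive, so a fixed point lies below
every feasible vector, and two fixed points lie below each other.
-/

section StandardInterference

variable {ι : Type*} {F : (ι → ℝ) → ι → ℝ}

theorem pos_of_map_le (hpos : ∀ q, (∀ i, 0 ≤ q i) → ∀ i, 0 < F q i)
    {q : ι → ℝ} (hq : ∀ i, 0 ≤ q i) (hqF : ∀ i, F q i ≤ q i) (i : ι) : 0 < q i :=
  (hpos q hq i).trans_le (hqF i)

theorem le_of_le_map_of_map_le [Fintype ι]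
    (hmono : ∀ q q', (∀ i, 0 ≤ q i) → (∀ i, q i ≤ q' i) → ∀ i, F q i ≤ F q' i)
    (hscal : ∀ q, (∀ i, 0 ≤ q i) → ∀ α : ℝ, 1 < α → ∀ i, F (α • q) i < α * F q i)
    {p q : ι → ℝ} (hp : ∀ i, 0 ≤ p i) (hpF : ∀ i, p i ≤ F p i)
    (hq : ∀ i, 0 < q i) (hqF : ∀ i, F q i ≤ q i) (i : ι) : p i ≤ q i := by
  by_contra! hlt
  obtain ⟨j, -, hj⟩ :=
    Finset.exists_max_image Finset.univ (fun k => p k / q k) ⟨i, Finset.mem_univ i⟩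
  set β := p j / q j
  have hβ : 1 < β := ((one_lt_div (hq i)).2 hlt).trans_le (hj i (Finset.mem_univ i))
  have hp_le : ∀ k, p k ≤ (β • q) k := fun k => by
    simpa [mul_comm] using (div_le_iff₀ (hq k)).1 (hj k (Finset.mem_univ k))
  have hpj : β * q j = p j := div_mul_cancel₀ _ (hq j).ne'
  have : p j < p j :=
    calc p j ≤ F p j := hpF j
      _ ≤ F (β • q) j := hmono p _ hp hp_le j
      _ < β * F q j := hscal q (fun k => (hq k).le) β hβ j
      _ ≤ β * q j := mul_le_mul_of_nonneg_left (hqF j) (by linarith)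
      _ = p j := hpj
  exact lt_irrefl _ this

end StandardInterference

theorem stmt_10_general (m : ℕ)
    (F : (Fin m → ℝ) → (Fin m → ℝ))
    (hpos : ∀ q, (∀ i, 0 ≤ q i) → ∀ i, 0 < F q i)
    (hmono : ∀ q q', (∀ i, 0 ≤ q i) → (∀ i, q i ≤ q' i) → ∀ i, F q i ≤ F q' i)
    (hscal : ∀ q, (∀ i, 0 ≤ q i) → ∀ α : ℝ, 1 < α → ∀ i, F (α • q) i < α * F q i)
    (qstar : Fin m → ℝ) (hqstar_nonneg : ∀ i, 0 ≤ qstar i)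
    (hfix : F qstar = qstar) :
    -- uniqueness of the fixed point
    (∀ q : Fin m → ℝ, (∀ i, 0 ≤ q i) → F q = q → q = qstar) ∧
    -- minimality among feasible vectors
    (∀ q : Fin m → ℝ, (∀ i, 0 ≤ q i) → (∀ i, F q i ≤ q i) → ∀ i, qstar i ≤ q i) := by
  have minimal : ∀ q : Fin m → ℝ, (∀ i, 0 ≤ q i) → (∀ i, F q i ≤ q i) → ∀ i, qstar i ≤ q i :=
    fun q hq hqF => le_of_le_map_of_map_le hmono hscal hqstar_nonneg
      (fun i => (congrFun hfix i).ge) (pos_of_map_le hpos hq hqF) hqF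
  refine ⟨fun q hq hqfix => funext fun i => le_antisymm ?_ ?_, minimal⟩
  · have hqstarF : ∀ i, F qstar i ≤ qstar i := fun i => (congrFun hfix i).le
    exact le_of_le_map_of_map_le hmono hscal hq (fun i => (congrFun hqfix i).ge)
      (pos_of_map_le hpos hqstar_nonneg hqstarF) hqstarF i
  · exact minimal q hq (fun i => (congrFun hqfix i).le) i

/-- Yates: a standard interference function `F` (positive, monotone,
scalable) has at most one fixed point, and any fixed point `q*` satisfies
`q* ≤ q` componentwise for every feasible `q` (i.e. every `q ≥ F q ≥ 0`). -/
theorem stmt_10 (m : ℕ) (hm : 0 < m)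
    (F : (Fin m → ℝ) → (Fin m → ℝ))
    (hpos : ∀ q, (∀ i, 0 ≤ q i) → ∀ i, 0 < F q i)
    (hmono : ∀ q q', (∀ i, 0 ≤ q i) → (∀ i, q i ≤ q' i) → ∀ i, F q i ≤ F q' i)
    (hscal : ∀ q, (∀ i, 0 ≤ q i) → ∀ α : ℝ, 1 < α → ∀ i, F (α • q) i < α * F q i)
    (qstar : Fin m → ℝ) (hqstar_nonneg : ∀ i, 0 ≤ qstar i)
    (hfix : F qstar = qstar) :
    -- uniqueness of the fixed point
    (∀ q : Fin m → ℝ, (∀ i, 0 ≤ q i) → F q = q → q = qstar) ∧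
    -- minimality among feasible vectors
    (∀ q : Fin m → ℝ, (∀ i, 0 ≤ q i) → (∀ i, F q i ≤ q i) → ∀ i, qstar i ≤ q i) :=
  stmt_10_general m F hpos hmono hscal qstar hqstar_nonneg hfix
end
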